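/- For fixed x > 0 and any β with 1 ≤ β ≤ 2, the map y ↦ d_β(x‖y) is convex on the positive reals, where d_β is the β-divergence (equal to x log(x/y) − x + y when β = 1 and (1/(β(β−1)))(x^β + (β−1)y^β − βxy^{β−1}) when 1 < β ≤ 2). -/
import Mathlib

theorem beta_div_convex_in_y (x β : ℝ) (hx : 0 < x) (hβ1 : 1 ≤ β) (hβ2 : β ≤ 2) :
    ConvexOn ℝ (Set.Ioi (0:ℝ))
      (fun y : ℝ =>
        if β = 1 then x * Real.log (x / y) - x + y
        else (1 / (β * (β - 1))) * (x ^ β + (β - 1) * y ^ β - β * x * y ^ (β - 1))) := by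
  by_cases hβ : β = 1
  · simp only [if_pos hβ]
    have h1 : ConvexOn ℝ (Set.Ioi (0:ℝ)) (fun y => x * (- Real.log y)) := by
      exact (strictConcaveOn_log_Ioi.concaveOn.neg).smul hx.le
    have h2 : ConvexOn ℝ (Set.Ioi (0:ℝ)) (fun y => x * (- Real.log y) + (x * Real.log x - x + y)) :=
      h1.add (ConvexOn.add (convexOn_const _ (convex_Ioi _)) (convexOn_id (convex_Ioi _)))
    refine h2.congr fun y hy => ?_
    rw [Real.log_div (ne_of_gt hx) (ne_of_gt hy)]
    ring
  · have hβ' : 1 < β := lt_of_le_of_ne hβ1 (Ne.symm hβ)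
    simp only [if_neg hβ]
    have hc : 0 ≤ 1 / (β * (β - 1)) := by
      have : 0 < β * (β - 1) := by nlinarith
      positivity
    have h1 : ConvexOn ℝ (Set.Ioi (0:ℝ)) (fun y : ℝ => (β - 1) * y ^ β) :=
      ((convexOn_rpow hβ1).subset Set.Ioi_subset_Ici_self (convex_Ioi _)).smul (by linarith)
    have h2 : ConvexOn ℝ (Set.Ioi (0:ℝ)) (fun y : ℝ => (β * x) * (- y ^ (β - 1))) := by
      have := (Real.concaveOn_rpow (p := β - 1) (by linarith) (by linarith)).subset
        Set.Ioi_subset_Ici_self (convex_Ioi _)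
      exact this.neg.smul (by positivity)
    have h3 : ConvexOn ℝ (Set.Ioi (0:ℝ))
        (fun y : ℝ => ((x ^ β + (β - 1) * y ^ β) + (β * x) * (- y ^ (β - 1)))) :=
      ((convexOn_const _ (convex_Ioi _)).add h1).add h2
    refine (h3.smul hc).congr fun y hy => ?_
    simp only [smul_eq_mul]
    ring
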